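/- Let Ω ⊂ ℝⁿ be compact with diameter δ, let m > 0, and for each N let χ^{(N)} : ℝⁿ → ℝ satisfy 0 ≤ χ^{(N)} ≤ 1 with supp χ^{(N)} ⊆ Ω_{1/N³}. Fix ξ ≠ 0 and t > mδ/|ξ|. Define Θ_{0,N}(x) = ∏_{k=0}^{N} χ^{(N)}(x + (k t/(N m)) ξ). Then there exists N₀ such that Θ_{0,N} ≡ 0 on ℝⁿ for all N ≥ N₀. -/

import Mathlib

/-!
The first and the last factor of `Θ_{0,N}` are evaluated at points `t‖ξ‖/m` apart. Both points
would have to lie in `Ω_{1/N³}`, whose diameter is at most `diam Ω + 2/N³`; since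
`t‖ξ‖/m > diam Ω`, this is impossible once `N` is large, so one of the two factors vanishes.
-/

open Metric Finset Filter

theorem dist_le_diam_add_of_mem_thickening {X : Type*} [PseudoMetricSpace X] {s : Set X}
    (hs : Bornology.IsBounded s) {ε : ℝ} (hε : 0 ≤ ε) {a b : X}
    (ha : a ∈ thickening ε s) (hb : b ∈ thickening ε s) : dist a b ≤ diam s + 2 * ε :=
  (dist_le_diam_of_mem hs.thickening ha hb).trans (diam_thickening_le s hε)

theorem prod_range_succ_eq_zero_of_diam_add_lt_dist {X : Type*} [PseudoMetricSpace X]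
    {s : Set X} (hs : Bornology.IsBounded s) {ε : ℝ} (hε : 0 ≤ ε) {f : X → ℝ}
    (hf : ∀ x, f x ≠ 0 → x ∈ thickening ε s) (p : ℕ → X) (N : ℕ)
    (hfar : diam s + 2 * ε < dist (p 0) (p N)) :
    ∏ k ∈ range (N + 1), f (p k) = 0 := by
  by_contra hprod
  have hne := prod_ne_zero_iff.mp hprod
  have h0 := hf _ (hne 0 (mem_range.mpr N.succ_pos))
  have hN := hf _ (hne N (mem_range.mpr N.lt_succ_self))
  exact hfar.not_ge (dist_le_diam_add_of_mem_thickening hs hε h0 hN)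

theorem zeroth_symbol_vanishes_general {n : ℕ} (Ω : Set (EuclideanSpace ℝ (Fin n)))
    (hΩ : IsCompact Ω) (m : ℝ) (hm : 0 < m)
    (χ : ℕ → EuclideanSpace ℝ (Fin n) → ℝ)
    (hsupp : ∀ N x, χ N x ≠ 0 → x ∈ Metric.thickening (1 / (N : ℝ) ^ 3) Ω)
    (ξ : EuclideanSpace ℝ (Fin n)) (hξ : ξ ≠ 0)
    (t : ℝ) (ht : t > m * Metric.diam Ω / ‖ξ‖) :
    ∃ N₀ : ℕ, ∀ N ≥ N₀, ∀ x,
      (∏ k ∈ Finset.range (N + 1), χ N (x + (((k : ℝ) * t / ((N : ℝ) * m)) • ξ))) = 0 := by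
  have hξ' : 0 < ‖ξ‖ := norm_pos_iff.mpr hξ
  have ht0 : 0 < t := (by positivity : 0 ≤ m * diam Ω / ‖ξ‖).trans_lt ht
  have hgap : diam Ω < t * ‖ξ‖ / m := by
    rw [gt_iff_lt, div_lt_iff₀ hξ'] at ht
    rw [lt_div_iff₀ hm]
    linarith
  have hsmall : ∀ᶠ N : ℕ in atTop, diam Ω + 2 * (1 / (N : ℝ) ^ 3) < t * ‖ξ‖ / m := by
    have hlim := ((tendsto_const_div_pow 1 3 three_ne_zero).const_mul 2).const_add (diam Ω)
    rw [mul_zero, add_zero] at hlim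
    exact hlim.eventually_lt_const hgap
  obtain ⟨N₀, hN₀⟩ := eventually_atTop.mp (hsmall.and (eventually_ne_atTop 0))
  refine ⟨N₀, fun N hN x => prod_range_succ_eq_zero_of_diam_add_lt_dist hΩ.isBounded
    (by positivity) (hsupp N) _ N ?_⟩
  obtain ⟨hfar, hN0⟩ := hN₀ N hN
  convert hfar using 1
  rw [Nat.cast_zero, zero_mul, zero_div, zero_smul, add_zero,
    mul_div_mul_left _ _ (Nat.cast_ne_zero.mpr hN0), dist_self_add_right, norm_smul,
    Real.norm_of_nonneg (by positivity)]
  ring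

/-- Classical Zeno symbol vanishes: with `χ^{(N)}` supported in `Ω_{1/N³}`,
`0 ≤ χ^{(N)} ≤ 1`, `ξ ≠ 0` and `t > m * diam Ω / ‖ξ‖`, the product
`Θ_{0,N}(x) = ∏_{k=0}^{N} χ^{(N)}(x + (k t/(N m)) ξ)` is identically zero for
all sufficiently large `N`. -/
theorem zeroth_symbol_vanishes {n : ℕ} (Ω : Set (EuclideanSpace ℝ (Fin n)))
    (hΩ : IsCompact Ω) (m : ℝ) (hm : 0 < m)
    (χ : ℕ → EuclideanSpace ℝ (Fin n) → ℝ)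
    (hχ0 : ∀ N x, 0 ≤ χ N x) (hχ1 : ∀ N x, χ N x ≤ 1)
    (hsupp : ∀ N x, χ N x ≠ 0 → x ∈ Metric.thickening (1 / (N : ℝ) ^ 3) Ω)
    (ξ : EuclideanSpace ℝ (Fin n)) (hξ : ξ ≠ 0)
    (t : ℝ) (ht : t > m * Metric.diam Ω / ‖ξ‖) :
    ∃ N₀ : ℕ, ∀ N ≥ N₀, ∀ x,
      (∏ k ∈ Finset.range (N + 1), χ N (x + (((k : ℝ) * t / ((N : ℝ) * m)) • ξ))) = 0 :=
  zeroth_symbol_vanishes_general Ω hΩ m hm χ hsupp ξ hξ t ht
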